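/- For every integer p ≥ 2, the polynomial v(τ) = (1+τ)^{p+2}(1−τ)^{p−2} satisfies the homogeneous Bianchi transport equation in the sector q = p for the component a₄, i.e. (1−τ²)·v''(τ) + (−4 + 2(p−1)τ)·v'(τ) + 2p·v(τ) = 0 for all real τ. -/

import Mathlib

/-!
Write `f = (1 + t)^m (1 - t)^n`. Logarithmic differentiation gives the first-order identity
`(1 - t²) f' = (m - n - (m + n) t) f`, which has no truncated exponents; differentiating it once
more expresses `(1 - t²) f''` through `f'` and `f`. For `m = p + 2`, `n = p - 2` one has
`m - n = 4` and `m + n = 2p`, and the transport equation is exactly that second identity.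
-/

section JacobiWeight

variable (m n : ℕ)

theorem one_sub_sq_mul_deriv_one_add_pow_mul_one_sub_pow (t : ℝ) :
    (1 - t ^ 2) * deriv (fun t : ℝ => (1 + t) ^ m * (1 - t) ^ n) t
      = ((m : ℝ) - n - (m + n) * t) * ((1 + t) ^ m * (1 - t) ^ n) := by
  have hderiv : HasDerivAt (fun t : ℝ => (1 + t) ^ m * (1 - t) ^ n)
      ((m : ℝ) * (1 + t) ^ (m - 1) * 1 * (1 - t) ^ n
        + (1 + t) ^ m * ((n : ℝ) * (1 - t) ^ (n - 1) * -1)) t :=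
    ((((hasDerivAt_id t).const_add 1).pow m).mul (((hasDerivAt_id t).const_sub 1).pow n))
  rw [hderiv.deriv]
  cases m <;> cases n <;> simp only [Nat.add_sub_cancel, pow_succ] <;> push_cast <;> ring

theorem one_sub_sq_mul_deriv_deriv_one_add_pow_mul_one_sub_pow (t : ℝ) :
    (1 - t ^ 2) * deriv (deriv (fun t : ℝ => (1 + t) ^ m * (1 - t) ^ n)) t
      = (2 * t + m - n - (m + n) * t) * deriv (fun t : ℝ => (1 + t) ^ m * (1 - t) ^ n) t
        - (m + n) * ((1 + t) ^ m * (1 - t) ^ n) := by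
  set f : ℝ → ℝ := fun t => (1 + t) ^ m * (1 - t) ^ n
  have hf_diff : Differentiable ℝ f := by fun_prop
  have hf'_diff : Differentiable ℝ (deriv f) :=
    ContDiff.differentiable_deriv_two (by fun_prop)
  have hfirst : (fun t : ℝ => (1 - t ^ 2) * deriv f t)
      = fun t => ((m : ℝ) - n - (m + n) * t) * f t :=
    funext (one_sub_sq_mul_deriv_one_add_pow_mul_one_sub_pow m n)
  have hlhs : HasDerivAt (fun t : ℝ => (1 - t ^ 2) * deriv f t)
      (-(2 * t) * deriv f t + (1 - t ^ 2) * deriv (deriv f) t) t := by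
    simpa using ((hasDerivAt_pow 2 t).const_sub 1).fun_mul (hf'_diff t).hasDerivAt
  have hrhs : HasDerivAt (fun t : ℝ => ((m : ℝ) - n - (m + n) * t) * f t)
      (-(m + n) * f t + ((m : ℝ) - n - (m + n) * t) * deriv f t) t := by
    simpa using (((hasDerivAt_id t).const_mul ((m : ℝ) + n)).const_sub ((m : ℝ) - n)).fun_mul
      (hf_diff t).hasDerivAt
  rw [hfirst] at hlhs
  linear_combination hlhs.unique hrhs

end JacobiWeight

theorem stmt_1 (p : ℕ) (hp : 2 ≤ p) :
    ∀ τ : ℝ,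
      (1 - τ ^ 2) * deriv (deriv (fun t : ℝ => (1 + t) ^ (p + 2) * (1 - t) ^ (p - 2))) τ
        + (-4 + 2 * ((p : ℝ) - 1) * τ) *
            deriv (fun t : ℝ => (1 + t) ^ (p + 2) * (1 - t) ^ (p - 2)) τ
        + 2 * (p : ℝ) * ((1 + τ) ^ (p + 2) * (1 - τ) ^ (p - 2)) = 0 := by
  intro τ
  have hcast : ((p - 2 : ℕ) : ℝ) = p - 2 := by push_cast [Nat.cast_sub hp]; ring
  have h := one_sub_sq_mul_deriv_deriv_one_add_pow_mul_one_sub_pow (p + 2) (p - 2) τ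
  rw [hcast] at h
  push_cast at h
  linear_combination h
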